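/- Let (M, v) be a valued module with value set ℤ ∪ {∞}, and let A, B, C be subgroups such that A ≈ B (m-immediate) and C is a pseudo-complement of A (i.e., M = A + C + P_γ for some γ and the value sets vA and vC intersect only in a final segment [δ, ∞]). Then C is also a pseudo-complement of B. -/

import Mathlib

/-- Subgroups `A`, `B` are m-immediate (`A ≈ B`): for some `γ`, the nonzero `rv`-classes
of elements of value `< γ` of `A` and of `B` coincide (`x RV y` iff
`v(x) = v(y) < v(x − y)`). -/
def MImm {M : Type*} [AddCommGroup M] (v : M → WithTop ℤ) (A B : AddSubgroup M) : Prop :=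
  ∃ γ : ℤ, (∀ a ∈ A, v a < (γ : WithTop ℤ) → ∃ b ∈ B, v b = v a ∧ v a < v (a - b)) ∧
    (∀ b ∈ B, v b < (γ : WithTop ℤ) → ∃ a ∈ A, v a = v b ∧ v b < v (b - a))

/-- Subgroups `A`, `B` are pseudo-orthogonal (`A ∥ B`): `vA ∩ vB` is contained in a final
segment `[γ, ∞]`. -/
def POrth {M : Type*} [AddCommGroup M] (v : M → WithTop ℤ) (A B : AddSubgroup M) : Prop :=
  ∃ γ : ℤ, ∀ a ∈ A, ∀ b ∈ B, v a = v b → (γ : WithTop ℤ) ≤ v a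

/-- `C` is a pseudo-complement of `A`: `M = A + C + P_γ` for some `γ`, and `A ∥ C`. -/
def PComp {M : Type*} [AddCommGroup M] (v : M → WithTop ℤ) (A C : AddSubgroup M) : Prop :=
  (∃ γ : ℤ, ∀ x : M, ∃ a ∈ A, ∃ c ∈ C, (γ : WithTop ℤ) ≤ v (x - a - c)) ∧ POrth v A C

/-!
Write `γ` for a common lower bound of the three thresholds in `A ≈ B` and `M = A + C + P_γ`,
`A ∥ C`. Pseudo-orthogonality passes from `A` to `B` because small values of `B` are values
of `A`. For `M = B + C + P_γ` it suffices to put every `a ∈ A` into `B + C + P_γ`. If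
`v a < γ`, choose `b ∈ B` with `v (a - b) > v a` and split `a - b = a' + c + p`. Then
`v (a' + c) > v a`, and since `A ∥ C` this forces `v a' > v a`. As values lie in `ℤ`, the
value of the remainder climbs to `γ` after finitely many such steps.
-/

section

variable {M : Type*} [AddCommGroup M] {v : M → WithTop ℤ}

/-- `x ∈ B + C + P_γ`. -/
def MemSumBall (v : M → WithTop ℤ) (B C : AddSubgroup M) (γ : ℤ) (x : M) : Prop :=
  ∃ b ∈ B, ∃ c ∈ C, (γ : WithTop ℤ) ≤ v (x - b - c)

theorem MemSumBall.mono {B C : AddSubgroup M} {γ γ' : ℤ} {x : M}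
    (h : MemSumBall v B C γ x) (hγ : γ' ≤ γ) : MemSumBall v B C γ' x := by
  obtain ⟨b, hb, c, hc, hx⟩ := h
  exact ⟨b, hb, c, hc, (WithTop.coe_le_coe.mpr hγ).trans hx⟩

theorem MemSumBall.add (hvadd : ∀ x y, min (v x) (v y) ≤ v (x + y))
    {B C : AddSubgroup M} {γ : ℤ} {x y : M}
    (hx : MemSumBall v B C γ x) (hy : MemSumBall v B C γ y) :
    MemSumBall v B C γ (x + y) := by
  obtain ⟨b, hb, c, hc, hx⟩ := hx
  obtain ⟨b', hb', c', hc', hy⟩ := hy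
  refine ⟨b + b', add_mem hb hb', c + c', add_mem hc hc', ?_⟩
  have hsplit : x + y - (b + b') - (c + c') = (x - b - c) + (y - b' - c') := by abel
  rw [hsplit]
  exact (le_min hx hy).trans (hvadd _ _)

theorem POrth.of_mImm {A B C : AddSubgroup M} (hAB : MImm v A B) (hAC : POrth v A C) :
    POrth v B C := by
  obtain ⟨γ₀, -, hBA⟩ := hAB
  obtain ⟨γ₂, horth⟩ := hAC
  refine ⟨min γ₀ γ₂, fun b hb c hc hbc => not_lt.mp fun hlt => ?_⟩
  obtain ⟨a, ha, hab, -⟩ := hBA b hb (hlt.trans_le (WithTop.coe_le_coe.mpr (min_le_left _ _)))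
  have hγ₂ : (γ₂ : WithTop ℤ) ≤ v b := hab ▸ horth a ha c hc (hab.trans hbc)
  exact hlt.not_ge ((WithTop.coe_le_coe.mpr (min_le_right _ _)).trans hγ₂)

theorem WithTop.coe_le_of_coe_sub_one_lt {n : ℤ} {y : WithTop ℤ}
    (h : ((n - 1 : ℤ) : WithTop ℤ) < y) : (n : WithTop ℤ) ≤ y := by
  cases y with
  | top => exact le_top
  | coe k => exact WithTop.coe_le_coe.mpr (Int.sub_one_lt_iff.mp (WithTop.coe_lt_coe.mp h))

theorem ascending_induction {α : Type*} (f : α → WithTop ℤ) (γ : ℤ) {P : α → Prop}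
    (base : ∀ x, (γ : WithTop ℤ) ≤ f x → P x)
    (step : ∀ x, f x < γ → ∃ y, f x < f y ∧ (P y → P x)) (x : α) : P x := by
  have key : ∀ n ≤ γ, ∀ x, (n : WithTop ℤ) ≤ f x → P x := by
    refine Int.leInductionDown base fun n hn ih x hx => ?_
    by_cases hnx : (n : WithTop ℤ) ≤ f x
    · exact ih x hnx
    obtain ⟨y, hxy, hPy⟩ := step x ((not_le.mp hnx).trans_le (WithTop.coe_le_coe.mpr hn))
    exact hPy (ih y (WithTop.coe_le_of_coe_sub_one_lt (hx.trans_lt hxy)))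
  cases hx : f x with
  | top => exact base x (hx ▸ le_top)
  | coe m =>
    exact key (min m γ) (min_le_right _ _) x (hx ▸ WithTop.coe_le_coe.mpr (min_le_left _ _))

section Ultrametric

variable (hvadd : ∀ x y, min (v x) (v y) ≤ v (x + y)) (hvneg : ∀ x, v (-x) = v x)
include hvadd hvneg

theorem min_le_val_sub (x y : M) : min (v x) (v y) ≤ v (x - y) := by
  simpa only [sub_eq_add_neg, hvneg] using hvadd x (-y)

theorem val_eq_of_lt_val_add {x y : M} (h : v x < v (x + y)) : v y = v x := by
  have hxy : v x ≤ v y := by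
    simpa [min_eq_right h.le] using min_le_val_sub hvadd hvneg (x + y) x
  refine le_antisymm (not_lt.mp fun hyx => ?_) hxy
  have := min_le_val_sub hvadd hvneg (x + y) y
  rw [add_sub_cancel_right] at this
  exact (lt_min h hyx).not_ge this

theorem min_val_add_le_val_of_orth {A C : AddSubgroup M} {γ : ℤ}
    (horth : ∀ a ∈ A, ∀ c ∈ C, v a = v c → (γ : WithTop ℤ) ≤ v a)
    {a c : M} (ha : a ∈ A) (hc : c ∈ C) : min (v (a + c)) γ ≤ v a := by
  by_contra! hlt
  have hca := val_eq_of_lt_val_add hvadd hvneg (lt_min_iff.mp hlt).1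
  exact (lt_min_iff.mp hlt).2.not_ge (horth a ha c hc hca.symm)

theorem exists_val_lt_memSumBall_sub {A B C : AddSubgroup M} {γ : ℤ}
    (hAB : ∀ a ∈ A, v a < γ → ∃ b ∈ B, v a < v (a - b))
    (hdec : ∀ x, MemSumBall v A C γ x)
    (horth : ∀ a ∈ A, ∀ c ∈ C, v a = v c → (γ : WithTop ℤ) ≤ v a)
    ⦃a : M⦄ (ha : a ∈ A) (hlt : v a < γ) :
    ∃ a' ∈ A, v a < v a' ∧ MemSumBall v B C γ (a - a') := by
  obtain ⟨b, hb, hab⟩ := hAB a ha hlt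
  obtain ⟨a', ha', c, hc, hp⟩ := hdec (a - b)
  have hsum : v a < v (a' + c) := by
    have := min_le_val_sub hvadd hvneg (a - b) (a - b - a' - c)
    rw [show a - b - (a - b - a' - c) = a' + c by abel] at this
    exact (lt_min hab (hlt.trans_le hp)).trans_le this
  refine ⟨a', ha', ?_, b, hb, c, hc, ?_⟩
  · exact (lt_min hsum hlt).trans_le (min_val_add_le_val_of_orth hvadd hvneg horth ha' hc)
  · rwa [show a - a' - b - c = a - b - a' - c by abel]

theorem exists_memSumBall_of_mImm {A B C : AddSubgroup M} (hAB : MImm v A B)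
    (hC : PComp v A C) : ∃ γ : ℤ, ∀ a ∈ A, MemSumBall v B C γ a := by
  obtain ⟨γ₀, hAB, -⟩ := hAB
  obtain ⟨⟨γ₁, hdec⟩, γ₂, horth⟩ := hC
  set γ := min γ₀ (min γ₁ γ₂)
  have hγ₀ : (γ : WithTop ℤ) ≤ γ₀ := WithTop.coe_le_coe.mpr (min_le_left _ _)
  have hγ₁ : γ ≤ γ₁ := (min_le_right _ _).trans (min_le_left _ _)
  have hγ₂ : (γ : WithTop ℤ) ≤ γ₂ :=
    WithTop.coe_le_coe.mpr ((min_le_right _ _).trans (min_le_right _ _))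
  have step := exists_val_lt_memSumBall_sub hvadd hvneg (B := B) (γ := γ)
    (fun a ha h => (hAB a ha (h.trans_le hγ₀)).imp fun _ ⟨hb, _, hab⟩ => ⟨hb, hab⟩)
    (fun x => MemSumBall.mono (hdec x) hγ₁)
    (fun a ha c hc h => hγ₂.trans (horth a ha c hc h))
  refine ⟨γ, fun a ha => ascending_induction (fun a : A => v a) γ
    (P := fun a : A => MemSumBall v B C γ a)
    (fun a h => ⟨0, zero_mem _, 0, zero_mem _, by simpa using h⟩) (fun a h => ?_) ⟨a, ha⟩⟩
  obtain ⟨a', ha', hlt, hsub⟩ := step a.2 h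
  refine ⟨⟨a', ha'⟩, hlt, fun h' => ?_⟩
  simpa using hsub.add hvadd h'

end Ultrametric

end

theorem stmt_15_general {M : Type*} [AddCommGroup M] (v : M → WithTop ℤ)
    (hvadd : ∀ x y, min (v x) (v y) ≤ v (x + y))
    (hvneg : ∀ x, v (-x) = v x)
    (A B C : AddSubgroup M) (hAB : MImm v A B) (hC : PComp v A C) :
    PComp v B C := by
  refine ⟨?_, hC.2.of_mImm hAB⟩
  obtain ⟨γ, hA⟩ := exists_memSumBall_of_mImm hvadd hvneg hAB hC
  obtain ⟨γ₁, hdec⟩ := hC.1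
  refine ⟨min γ γ₁, fun x => ?_⟩
  obtain ⟨a, ha, c, hc, hx⟩ := hdec x
  have hxa : MemSumBall v B C (min γ γ₁) (x - a) :=
    MemSumBall.mono ⟨0, zero_mem _, c, hc, by simpa using hx⟩ (min_le_right γ γ₁)
  have := hxa.add hvadd ((hA a ha).mono (min_le_left _ _))
  rwa [sub_add_cancel] at this

/-- in a valued module `(M, v)` with values in `ℤ ∪ {∞}`, if `A ≈ B`
(m-immediate) and `C` is a pseudo-complement of `A`, then `C` is a pseudo-complement
of `B`. -/
theorem stmt_15 {M : Type*} [AddCommGroup M] (v : M → WithTop ℤ)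
    (hv0 : ∀ x, v x = ⊤ ↔ x = 0)
    (hvadd : ∀ x y, min (v x) (v y) ≤ v (x + y))
    (hvneg : ∀ x, v (-x) = v x)
    (hvsurj : Function.Surjective v)
    (A B C : AddSubgroup M) (hAB : MImm v A B) (hC : PComp v A C) :
    PComp v B C :=
  stmt_15_general v hvadd hvneg A B C hAB hC
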